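/- For every natural number N ≥ 1 and every μ > 0, I₁(μ) := Σ_{k,ℓ=0}^{N} binom(N,k) binom(N,ℓ) (k−ℓ)² e^{-μ(k−ℓ)²} satisfies I₁(μ) = −dI(μ)/dμ = (N · 2^{2N}/√μ) ∫_{-∞}^{+∞} (e^{-u²}/√π) · u · cos^{2N−1}(u√μ) · sin(u√μ) du, where I(μ) = Σ_{k,ℓ=0}^{N} binom(N,k) binom(N,ℓ) e^{-μ(k−ℓ)²}. -/

import Mathlib

/-!
The derivative is taken term by term. For the integral, the Fourier transform of the Gaussian
and an integration by parts give `∫ u e^{-u²} sin(a u) du = (a √π / 2) e^{-a²/4}`, so with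
`a = 2(k - ℓ)√μ` every summand of `√μ · I₁` is such an integral. Summing them under the
integral leaves the trigonometric sum `Σ C(N,k) C(N,ℓ) (k - ℓ) sin(2(k - ℓ)x)`, which is
`N 2^{2N} cos^{2N-1} x sin x`: it is `-1/2` times the derivative of
`Σ C(N,k) C(N,ℓ) cos(2(k - ℓ)x) = Re((1 + e^{2ix})^N (1 + e^{-2ix})^N) = (2 cos x)^{2N}`.
-/

open MeasureTheory Real Finset

theorem hasDerivAt_sum_sum_mul_exp_neg_mul {ι κ : Type*} (s : Finset ι) (t : Finset κ)
    (c d : ι → κ → ℝ) (μ : ℝ) :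
    HasDerivAt (fun m => ∑ i ∈ s, ∑ j ∈ t, c i j * exp (-m * d i j))
      (-∑ i ∈ s, ∑ j ∈ t, c i j * d i j * exp (-μ * d i j)) μ := by
  simp only [← sum_neg_distrib]
  exact HasDerivAt.fun_sum fun i _ => HasDerivAt.fun_sum fun j _ =>
    (((hasDerivAt_neg' μ).mul_const (d i j)).exp.const_mul (c i j)).congr_deriv (by ring)

section Gaussian

variable {b : ℝ}

theorem integrable_exp_neg_mul_sq_mul_cos (hb : 0 < b) (a : ℝ) :
    Integrable fun x : ℝ => exp (-b * x ^ 2) * cos (a * x) :=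
  (integrable_exp_neg_mul_sq hb).mul_bdd (by fun_prop)
    (ae_of_all _ fun x => (norm_eq_abs _).trans_le (abs_cos_le_one _))

theorem integrable_mul_exp_neg_mul_sq_mul_sin (hb : 0 < b) (a : ℝ) :
    Integrable fun x : ℝ => x * exp (-b * x ^ 2) * sin (a * x) :=
  (integrable_mul_exp_neg_mul_sq hb).mul_bdd (by fun_prop)
    (ae_of_all _ fun x => (norm_eq_abs _).trans_le (abs_sin_le_one _))

theorem integral_exp_neg_mul_sq_mul_cos (hb : 0 < b) (a : ℝ) :
    ∫ x : ℝ, exp (-b * x ^ 2) * cos (a * x) = √(π / b) * exp (-a ^ 2 / (4 * b)) := by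
  have hb' : (-(b : ℂ)).re < 0 := by simpa using hb
  have hre (x : ℝ) : (Complex.exp (-b * x ^ 2 + Complex.I * a * x + 0)).re
      = exp (-b * x ^ 2) * cos (a * x) := by
    rw [show (-b * x ^ 2 + Complex.I * a * x + 0 : ℂ)
        = ((-b * x ^ 2 : ℝ) : ℂ) + ((a * x : ℝ) : ℂ) * Complex.I by push_cast; ring,
      Complex.exp_add, ← Complex.ofReal_exp, Complex.re_ofReal_mul,
      Complex.exp_ofReal_mul_I_re]
  calc ∫ x : ℝ, exp (-b * x ^ 2) * cos (a * x)
      = (∫ x : ℝ, Complex.exp (-b * x ^ 2 + Complex.I * a * x + 0)).re := by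
        simp_rw [← hre]; exact integral_re (integrable_cexp_quadratic' hb' _ _)
    _ = √(π / b) * exp (-a ^ 2 / (4 * b)) := by
        have hsqrt : ((π : ℂ) / b) ^ (1 / 2 : ℂ) = ((√(π / b) : ℝ) : ℂ) := by
          rw [sqrt_eq_rpow, Complex.ofReal_cpow (by positivity)]
          push_cast; rfl
        have hexp : (0 - (Complex.I * a) ^ 2 / (4 * -b) : ℂ)
            = ((-a ^ 2 / (4 * b) : ℝ) : ℂ) := by
          push_cast; rw [mul_pow, Complex.I_sq]; ring
        rw [integral_cexp_quadratic hb', neg_neg, hsqrt, hexp, ← Complex.ofReal_exp,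
          ← Complex.ofReal_mul, Complex.ofReal_re]

theorem integral_mul_exp_neg_mul_sq_mul_sin (hb : 0 < b) (a : ℝ) :
    ∫ x : ℝ, x * exp (-b * x ^ 2) * sin (a * x)
      = a / (2 * b) * (√(π / b) * exp (-a ^ 2 / (4 * b))) := by
  have hderiv (x : ℝ) : HasDerivAt (fun x => exp (-b * x ^ 2) * sin (a * x))
      (-2 * b * (x * exp (-b * x ^ 2) * sin (a * x)) + a * (exp (-b * x ^ 2) * cos (a * x)))
      x := by
    refine (((hasDerivAt_pow 2 x).const_mul (-b)).exp.fun_mul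
      ((hasDerivAt_id' x).const_mul a).sin).congr_deriv ?_
    push_cast
    ring
  have hF : Integrable fun x : ℝ => exp (-b * x ^ 2) * sin (a * x) :=
    (integrable_exp_neg_mul_sq hb).mul_bdd (by fun_prop)
      (ae_of_all _ fun x => (norm_eq_abs _).trans_le (abs_sin_le_one _))
  have hsin := (integrable_mul_exp_neg_mul_sq_mul_sin hb a).const_mul (-2 * b)
  have hcos := (integrable_exp_neg_mul_sq_mul_cos hb a).const_mul a
  have h0 := integral_eq_zero_of_hasDerivAt_of_integrable hderiv (hsin.add hcos) hF
  rw [integral_add hsin hcos, integral_const_mul, integral_const_mul,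
    integral_exp_neg_mul_sq_mul_cos hb] at h0
  rw [div_mul_eq_mul_div, eq_div_iff (by positivity)]
  linear_combination -h0

end Gaussian

theorem sum_choose_mul_pow {R : Type*} [CommSemiring R] (N : ℕ) (w : R) :
    ∑ k ∈ range (N + 1), (N.choose k : R) * w ^ k = (1 + w) ^ N := by
  rw [add_comm 1 w, add_pow]
  exact sum_congr rfl fun k _ => by rw [one_pow, mul_one, mul_comm]

theorem sum_choose_mul_choose_mul_cos (N : ℕ) (x : ℝ) :
    ∑ k ∈ range (N + 1), ∑ ℓ ∈ range (N + 1),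
      (N.choose k : ℝ) * N.choose ℓ * cos (2 * ((k : ℝ) - ℓ) * x)
      = 2 ^ (2 * N) * cos x ^ (2 * N) := by
  set e := Complex.exp (2 * x * Complex.I)
  set e' := Complex.exp (-(2 * x) * Complex.I)
  have hterm (k ℓ : ℕ) : ((N.choose k : ℂ) * e ^ k * ((N.choose ℓ : ℂ) * e' ^ ℓ)).re
      = N.choose k * N.choose ℓ * cos (2 * ((k : ℝ) - ℓ) * x) := by
    rw [show (N.choose k : ℂ) * e ^ k * ((N.choose ℓ : ℂ) * e' ^ ℓ)
        = ((N.choose k * N.choose ℓ : ℝ) : ℂ)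
          * Complex.exp ((2 * ((k : ℝ) - ℓ) * x : ℝ) * Complex.I) by
      simp only [e, e', ← Complex.exp_nat_mul, mul_mul_mul_comm _ (Complex.exp _),
        ← Complex.exp_add]
      push_cast; ring_nf,
      Complex.re_ofReal_mul, Complex.exp_ofReal_mul_I_re]
  have hfactor : (1 + e) * (1 + e') = ((4 * cos x ^ 2 : ℝ) : ℂ) := by
    have hee' : e * e' = 1 := by rw [← Complex.exp_add, ← Complex.exp_zero]; ring_nf
    have h2cos := Complex.two_cos (2 * x)
    rw [Complex.cos_two_mul] at h2cos
    push_cast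
    linear_combination hee' - h2cos
  calc ∑ k ∈ range (N + 1), ∑ ℓ ∈ range (N + 1),
        (N.choose k : ℝ) * N.choose ℓ * cos (2 * ((k : ℝ) - ℓ) * x)
      = ((∑ k ∈ range (N + 1), (N.choose k : ℂ) * e ^ k)
          * ∑ ℓ ∈ range (N + 1), (N.choose ℓ : ℂ) * e' ^ ℓ).re := by
        simp only [sum_mul_sum, Complex.re_sum, hterm]
    _ = 2 ^ (2 * N) * cos x ^ (2 * N) := by
        rw [sum_choose_mul_pow, sum_choose_mul_pow, ← mul_pow, hfactor, ← Complex.ofReal_pow,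
          Complex.ofReal_re, mul_pow, pow_mul, pow_mul]
        norm_num

theorem sum_choose_mul_choose_mul_sub_mul_sin (N : ℕ) (x : ℝ) :
    ∑ k ∈ range (N + 1), ∑ ℓ ∈ range (N + 1),
      (N.choose k : ℝ) * N.choose ℓ * ((k : ℝ) - ℓ) * sin (2 * ((k : ℝ) - ℓ) * x)
      = N * 2 ^ (2 * N) * cos x ^ (2 * N - 1) * sin x := by
  have hL : HasDerivAt (fun x => ∑ k ∈ range (N + 1), ∑ ℓ ∈ range (N + 1),
      (N.choose k : ℝ) * N.choose ℓ * cos (2 * ((k : ℝ) - ℓ) * x))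
      (-2 * ∑ k ∈ range (N + 1), ∑ ℓ ∈ range (N + 1),
        (N.choose k : ℝ) * N.choose ℓ * ((k : ℝ) - ℓ) * sin (2 * ((k : ℝ) - ℓ) * x))
      x := by
    simp only [mul_sum]
    exact HasDerivAt.fun_sum fun k _ => HasDerivAt.fun_sum fun ℓ _ =>
      (((hasDerivAt_id' x).const_mul _).cos.const_mul _).congr_deriv (by ring)
  rw [funext (sum_choose_mul_choose_mul_cos N)] at hL
  have hderiv := hL.unique (((hasDerivAt_cos x).fun_pow (2 * N)).const_mul (2 ^ (2 * N) : ℝ))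
  push_cast at hderiv
  linear_combination -hderiv / 2

theorem mul_integral_gaussian_mul_cos_pow_mul_sin (N : ℕ) (s : ℝ) :
    N * 2 ^ (2 * N) *
        ∫ u : ℝ, exp (-u ^ 2) / √π * u * cos (u * s) ^ (2 * N - 1) * sin (u * s)
      = s * ∑ k ∈ range (N + 1), ∑ ℓ ∈ range (N + 1),
          (N.choose k : ℝ) * N.choose ℓ * ((k : ℝ) - ℓ) ^ 2
            * exp (-s ^ 2 * ((k : ℝ) - ℓ) ^ 2) := by
  have hgauss (a : ℝ) :
      ∫ u : ℝ, u * exp (-u ^ 2) * sin (a * u) = a / 2 * (√π * exp (-a ^ 2 / 4)) := by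
    simpa using integral_mul_exp_neg_mul_sq_mul_sin one_pos a
  have hint (a : ℝ) : Integrable fun u : ℝ => u * exp (-u ^ 2) * sin (a * u) := by
    simpa using integrable_mul_exp_neg_mul_sq_mul_sin one_pos a
  have hpt (u : ℝ) :
      N * 2 ^ (2 * N) * (exp (-u ^ 2) / √π * u * cos (u * s) ^ (2 * N - 1) * sin (u * s))
        = ∑ k ∈ range (N + 1), ∑ ℓ ∈ range (N + 1),
            (N.choose k : ℝ) * N.choose ℓ * ((k : ℝ) - ℓ) / √π
              * (u * exp (-u ^ 2) * sin (2 * ((k : ℝ) - ℓ) * s * u)) := by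
    rw [show N * 2 ^ (2 * N) * (exp (-u ^ 2) / √π * u * cos (u * s) ^ (2 * N - 1) * sin (u * s))
        = exp (-u ^ 2) / √π * u * (N * 2 ^ (2 * N) * cos (u * s) ^ (2 * N - 1) * sin (u * s)) by
      ring, ← sum_choose_mul_choose_mul_sub_mul_sin, mul_sum]
    refine sum_congr rfl fun k _ => ?_
    rw [mul_sum]
    refine sum_congr rfl fun ℓ _ => ?_
    rw [show 2 * ((k : ℝ) - ℓ) * s * u = 2 * ((k : ℝ) - ℓ) * (u * s) by ring]
    ring
  calc N * 2 ^ (2 * N) *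
        ∫ u : ℝ, exp (-u ^ 2) / √π * u * cos (u * s) ^ (2 * N - 1) * sin (u * s)
      = ∑ k ∈ range (N + 1), ∑ ℓ ∈ range (N + 1),
          (N.choose k : ℝ) * N.choose ℓ * ((k : ℝ) - ℓ) / √π
            * ∫ u : ℝ, u * exp (-u ^ 2) * sin (2 * ((k : ℝ) - ℓ) * s * u) := by
        rw [← integral_const_mul, funext hpt,
          integral_finsetSum _ fun k _ => integrable_finsetSum _ fun ℓ _ => (hint _).const_mul _]
        refine sum_congr rfl fun k _ => ?_
        rw [integral_finsetSum _ fun ℓ _ => (hint _).const_mul _]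
        exact sum_congr rfl fun ℓ _ => integral_const_mul _ _
    _ = s * ∑ k ∈ range (N + 1), ∑ ℓ ∈ range (N + 1),
          (N.choose k : ℝ) * N.choose ℓ * ((k : ℝ) - ℓ) ^ 2
            * exp (-s ^ 2 * ((k : ℝ) - ℓ) ^ 2) := by
        simp only [mul_sum, hgauss]
        refine sum_congr rfl fun k _ => sum_congr rfl fun ℓ _ => ?_
        rw [show -(2 * ((k : ℝ) - ℓ) * s) ^ 2 / 4 = -s ^ 2 * ((k : ℝ) - ℓ) ^ 2 by ring]
        field_simp

theorem first_derivative_of_purity_sum_general (N : ℕ) (μ : ℝ) (hμ : 0 < μ) :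
    let I : ℝ → ℝ := fun m =>
      ∑ k ∈ Finset.range (N + 1), ∑ ℓ ∈ Finset.range (N + 1),
        (N.choose k : ℝ) * (N.choose ℓ : ℝ) * Real.exp (-m * ((k : ℝ) - (ℓ : ℝ)) ^ 2)
    let I₁ : ℝ :=
      ∑ k ∈ Finset.range (N + 1), ∑ ℓ ∈ Finset.range (N + 1),
        (N.choose k : ℝ) * (N.choose ℓ : ℝ) * ((k : ℝ) - (ℓ : ℝ)) ^ 2 *
          Real.exp (-μ * ((k : ℝ) - (ℓ : ℝ)) ^ 2)
    HasDerivAt I (-I₁) μ ∧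
    I₁ = ((N : ℝ) * 2 ^ (2 * N) / Real.sqrt μ) *
        ∫ u : ℝ, (Real.exp (-u ^ 2) / Real.sqrt Real.pi) * u *
          Real.cos (u * Real.sqrt μ) ^ (2 * N - 1) * Real.sin (u * Real.sqrt μ) := by
  intro I I₁
  refine ⟨hasDerivAt_sum_sum_mul_exp_neg_mul _ _ (fun k ℓ => (N.choose k : ℝ) * N.choose ℓ)
    (fun k ℓ => ((k : ℝ) - ℓ) ^ 2) μ, ?_⟩
  rw [div_mul_eq_mul_div, mul_integral_gaussian_mul_cos_pow_mul_sin, sq_sqrt hμ.le,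
    mul_div_cancel_left₀ _ (sqrt_pos.mpr hμ).ne']

/-- For `N ≥ 1` and `μ > 0`, the sum `I₁(μ) = Σ_{k,ℓ} C(N,k) C(N,ℓ) (k-ℓ)² e^{-μ(k-ℓ)²}`
equals `-dI(μ)/dμ` for `I(μ) = Σ_{k,ℓ} C(N,k) C(N,ℓ) e^{-μ(k-ℓ)²}`, and admits the integral
representation `I₁(μ) = (N·2^{2N}/√μ) ∫ℝ (e^{-u²}/√π) u cos^{2N-1}(u√μ) sin(u√μ) du`. -/
theorem first_derivative_of_purity_sum (N : ℕ) (hN : 1 ≤ N) (μ : ℝ) (hμ : 0 < μ) :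
    let I : ℝ → ℝ := fun m =>
      ∑ k ∈ Finset.range (N + 1), ∑ ℓ ∈ Finset.range (N + 1),
        (N.choose k : ℝ) * (N.choose ℓ : ℝ) * Real.exp (-m * ((k : ℝ) - (ℓ : ℝ)) ^ 2)
    let I₁ : ℝ :=
      ∑ k ∈ Finset.range (N + 1), ∑ ℓ ∈ Finset.range (N + 1),
        (N.choose k : ℝ) * (N.choose ℓ : ℝ) * ((k : ℝ) - (ℓ : ℝ)) ^ 2 *
          Real.exp (-μ * ((k : ℝ) - (ℓ : ℝ)) ^ 2)
    HasDerivAt I (-I₁) μ ∧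
    I₁ = ((N : ℝ) * 2 ^ (2 * N) / Real.sqrt μ) *
        ∫ u : ℝ, (Real.exp (-u ^ 2) / Real.sqrt Real.pi) * u *
          Real.cos (u * Real.sqrt μ) ^ (2 * N - 1) * Real.sin (u * Real.sqrt μ) :=
  first_derivative_of_purity_sum_general N μ hμ
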